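/- Fix real numbers g > 0 and s ≥ 0 and define, for 0 < u, v < 1, ρ*(u,v) = [2(u∧v)²(1−(u∨v))²·g + (u∧v)(1−(u∨v))(1−2u)(1−2v)·s] / (σ*(u)σ*(v)), where σ*(x) = √(2x²(1−x)²·g + x(1−x)(1−2x)²·s). Then for each fixed v ∈ (0,1), the one-sided first derivatives of u ↦ ρ*(u,v) at u = v satisfy lim_{u↗v} ∂ρ*(u,v)/∂u = − lim_{u↘v} ∂ρ*(u,v)/∂u; that is, the left derivative at the diagonal equals the negative of the right derivative. -/

import Mathlib

/-!
Write `ρ*(u,v) = K(u ∧ v, u ∨ v) / (σ*(u) σ*(v))` with the polynomial kernel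
`K(a,b) = 2a²(1-b)²g + a(1-b)(1-2a)(1-2b)s`, so that `σ*(x)² = K(x,x)`. To the left of the
diagonal `ρ*(·,v)` agrees with the smooth branch `K(u,v) / (σ*(u) σ*(v))`, to the right with
`K(v,u) / (σ*(u) σ*(v))`, so the one-sided limits of the derivative are the derivatives of the two
branches at `v`. Their sum is `((∂₁K + ∂₂K)(v,v) - 2σ*(v)σ*'(v)) / σ*(v)²`, which vanishes because
the derivative of the diagonal `u ↦ K(u,u) = σ*(u)²` is the sum of the two partial derivatives.
-/

open Filter Topology

namespace GraphCP

/-- `σ*(x) = √(2x²(1−x)²·g + x(1−x)(1−2x)²·s)`. -/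
noncomputable def sigmaStar (g s x : ℝ) : ℝ :=
  Real.sqrt (2 * x ^ 2 * (1 - x) ^ 2 * g + x * (1 - x) * (1 - 2 * x) ^ 2 * s)

/-- `ρ*(u,v)`, the covariance function of the limiting Gaussian process of the
single change-point scan statistic. -/
noncomputable def rhoStar (g s u v : ℝ) : ℝ :=
  (2 * (min u v) ^ 2 * (1 - max u v) ^ 2 * g +
      (min u v) * (1 - max u v) * (1 - 2 * u) * (1 - 2 * v) * s) /
    (sigmaStar g s u * sigmaStar g s v)

open Function Set

section Kernel

variable {F : ℝ → ℝ → ℝ} {v : ℝ}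

theorem exists_hasDerivAt_diag_eq_add (hF : DifferentiableAt ℝ (uncurry F) (v, v)) :
    ∃ a b, HasDerivAt (F · v) a v ∧ HasDerivAt (F v) b v ∧
      HasDerivAt (fun u => F u u) (a + b) v := by
  set L := fderiv ℝ (uncurry F) (v, v)
  have hL := hF.hasFDerivAt
  refine ⟨L (1, 0), L (0, 1),
    hL.comp_hasDerivAt (f := fun u => (u, v)) v ((hasDerivAt_id v).prodMk (hasDerivAt_const v v)),
    hL.comp_hasDerivAt (f := fun u => (v, u)) v ((hasDerivAt_const v v).prodMk (hasDerivAt_id v)),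
    ?_⟩
  rw [← map_add, Prod.mk_add_mk, add_zero, zero_add]
  exact hL.comp_hasDerivAt (f := fun u => (u, u)) v ((hasDerivAt_id v).prodMk (hasDerivAt_id v))

theorem deriv_div_sqrt_diag_left_eq_neg_right (hF : DifferentiableAt ℝ (uncurry F) (v, v))
    (hpos : 0 < F v v) :
    deriv (fun u => F u v / √(F u u)) v = -deriv (fun u => F v u / √(F u u)) v := by
  obtain ⟨a, b, ha, hb, hab⟩ := exists_hasDerivAt_diag_eq_add hF
  have hσ := hab.sqrt hpos.ne'
  have hσ0 : √(F v v) ≠ 0 := Real.sqrt_ne_zero'.2 hpos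
  rw [(ha.fun_div hσ hσ0).deriv, (hb.fun_div hσ hσ0).deriv]
  field_simp
  rw [Real.sq_sqrt hpos.le]
  ring

end Kernel

theorem tendsto_deriv_of_eqOn {f φ : ℝ → ℝ} {s : Set ℝ} {l : Filter ℝ} {v : ℝ}
    (hs : IsOpen s) (hfφ : EqOn f φ s) (hsl : s ∈ l) (hl : l ≤ 𝓝 v)
    (hφ : ContDiffAt ℝ 1 φ v) : Tendsto (deriv f) l (𝓝 (deriv φ v)) := by
  have hderiv : deriv f =ᶠ[l] deriv φ :=
    mem_of_superset hsl fun u hu => (eventuallyEq_of_mem (hs.mem_nhds hu) hfφ).deriv_eq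
  exact ((hφ.derivWithin (m := 0) le_rfl).continuousAt.tendsto.mono_left hl).congr' hderiv.symm

noncomputable def covKernel (g s a b : ℝ) : ℝ :=
  2 * a ^ 2 * (1 - b) ^ 2 * g + a * (1 - b) * (1 - 2 * a) * (1 - 2 * b) * s

section CovKernel

variable {g s : ℝ}

@[fun_prop]
theorem contDiff_covKernel {n : WithTop ℕ∞} :
    ContDiff ℝ n fun p : ℝ × ℝ => covKernel g s p.1 p.2 := by
  unfold covKernel
  fun_prop

theorem covKernel_diag_pos (hg : 0 < g) (hs : 0 ≤ s) {x : ℝ} (hx0 : 0 < x) (hx1 : x < 1) :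
    0 < covKernel g s x x := by
  have h1x : 0 < 1 - x := by linarith
  have hsq : 0 ≤ x * (1 - x) * (1 - 2 * x) ^ 2 * s := by positivity
  unfold covKernel
  linarith [show 0 < 2 * x ^ 2 * (1 - x) ^ 2 * g by positivity]

theorem sigmaStar_eq_sqrt_covKernel (x : ℝ) : sigmaStar g s x = √(covKernel g s x x) := by
  unfold sigmaStar covKernel
  ring_nf

theorem rhoStar_of_le {u v : ℝ} (h : u ≤ v) :
    rhoStar g s u v = covKernel g s u v / √(covKernel g s u u) / sigmaStar g s v := by
  rw [rhoStar, min_eq_left h, max_eq_right h, ← sigmaStar_eq_sqrt_covKernel, div_div, covKernel]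

theorem rhoStar_of_ge {u v : ℝ} (h : v ≤ u) :
    rhoStar g s u v = covKernel g s v u / √(covKernel g s u u) / sigmaStar g s v := by
  rw [rhoStar, min_eq_right h, max_eq_left h, ← sigmaStar_eq_sqrt_covKernel, div_div, covKernel]
  ring_nf

end CovKernel

/-- For each fixed `v ∈ (0,1)`, the one-sided limits of `u ↦ ∂ρ*(u,v)/∂u` at `u = v`
exist and the left limit is the negative of the right limit. -/
theorem rhoStar_one_sided_derivs (g s : ℝ) (hg : 0 < g) (hs : 0 ≤ s)
    (v : ℝ) (hv0 : 0 < v) (hv1 : v < 1) :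
    ∃ L : ℝ,
      Tendsto (fun u => deriv (fun u' => rhoStar g s u' v) u) (𝓝[<] v) (𝓝 L) ∧
      Tendsto (fun u => deriv (fun u' => rhoStar g s u' v) u) (𝓝[>] v) (𝓝 (-L)) := by
  have hpos := covKernel_diag_pos hg hs hv0 hv1
  have hK : covKernel g s v v ≠ 0 := hpos.ne'
  have hσ : √(covKernel g s v v) ≠ 0 := Real.sqrt_ne_zero'.2 hpos
  refine ⟨deriv (fun u => covKernel g s u v / √(covKernel g s u u) / sigmaStar g s v) v, ?_, ?_⟩
  · exact tendsto_deriv_of_eqOn isOpen_Iio (fun u hu => rhoStar_of_le (le_of_lt hu))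
      self_mem_nhdsWithin nhdsWithin_le_nhds (by fun_prop (disch := assumption))
  · rw [deriv_div_const, deriv_div_sqrt_diag_left_eq_neg_right (F := covKernel g s)
      (contDiff_covKernel.differentiable one_ne_zero _) hpos, neg_div, neg_neg, ← deriv_div_const]
    exact tendsto_deriv_of_eqOn isOpen_Ioi (fun u hu => rhoStar_of_ge (le_of_lt hu))
      self_mem_nhdsWithin nhdsWithin_le_nhds (by fun_prop (disch := assumption))

end GraphCP
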